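/- Let S be a pre-Hilbert space, L a pre-Hilbert space logic on S, and F a finite dimensional linear subspace of S. Then the map T_F : L → L, A ↦ A + F, is o-continuous; in particular, if A_γ ↑ A in L then A_γ + F ↑ A + F in L, and if A_γ ↓ A in L then A_γ + F ↓ A + F in L. -/

import Mathlib

variable {𝕜 S : Type*} [RCLike 𝕜] [NormedAddCommGroup S] [InnerProductSpace 𝕜 S]

/-- A pre-Hilbert space logic on a pre-Hilbert space `S`: a family of orthogonally closed
linear subspaces containing `{0}`, closed under orthocomplementation and under the
addition of one-dimensional subspaces. -/
def IsPreHilbertLogic (L : Set (Submodule 𝕜 S)) : Prop :=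
  (∀ M ∈ L, Mᗮᗮ = M) ∧ (⊥ : Submodule 𝕜 S) ∈ L ∧ (∀ M ∈ L, Mᗮ ∈ L) ∧
    ∀ M ∈ L, ∀ u : S, M ⊔ (𝕜 ∙ u) ∈ L

section NetDefs

variable {Γ P : Type*} [Preorder Γ] [Preorder P]

/-- A net `x` increases to `l`: it is monotone and `l` is its supremum. -/
def IncreasingTo (x : Γ → P) (l : P) : Prop :=
  Monotone x ∧ IsLUB (Set.range x) l

/-- A net `x` decreases to `l`: it is antitone and `l` is its infimum. -/
def DecreasingTo (x : Γ → P) (l : P) : Prop :=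
  Antitone x ∧ IsGLB (Set.range x) l

/-- Order convergence of a net in a poset. -/
def OConvergesTo (x : Γ → P) (l : P) : Prop :=
  ∃ a b : Γ → P, (∀ γ, a γ ≤ x γ) ∧ (∀ γ, x γ ≤ b γ) ∧ IncreasingTo a l ∧ DecreasingTo b l

end NetDefs

/-!
Adding `F` preserves order and suprema, so the content is in infima. Let `Aᵧ ↓ A` and let
`C ∈ L` lie below every `Aᵧ + F`. Put `C' = C + F ∈ L` and `Dᵧ = C' ∩ Aᵧ`; by modularity
`C' = Dᵧ + F` for all `γ`. The subspaces `F ∩ Dᵧ` of the finite dimensional `F` stabilise along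
the directed set, and modularity then forces the decreasing net `Dᵧ` to be eventually constant,
equal to some `D` lying below every `Aᵧ`. As `D` is orthogonally closed and of finite
codimension in `C' ∈ L`, cutting `C'` down by finitely many hyperplanes `gᗮ` (each step stays
in `L` since `C' ∩ gᗮ = (C'ᗮ + span{g})ᗮ`) shows `D ∈ L`. Hence `D ≤ A` and
`C ≤ C' = D + F ≤ A + F`.
-/

open Module Submodule

section Modular

variable {K V : Type*} [DivisionRing K] [AddCommGroup V] [Module K V]

theorem Submodule.exists_forall_le_of_antitone_of_le_sup {Γ : Type*} [Preorder Γ]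
    [IsDirected Γ (· ≤ ·)] [Nonempty Γ] {D : Γ → Submodule K V} (hD : Antitone D)
    (F : Submodule K V) [FiniteDimensional K F] (hDF : ∀ γ γ', D γ ≤ D γ' ⊔ F) :
    ∃ γ₀, ∀ γ, D γ₀ ≤ D γ := by
  let γ₀ := Function.argmin fun γ => finrank K ↥(F ⊓ D γ)
  refine ⟨γ₀, fun γ => ?_⟩
  obtain ⟨γ', hγ₀γ', hγγ'⟩ := directed_of (· ≤ ·) γ₀ γ
  have hstable : F ⊓ D γ' = F ⊓ D γ₀ :=
    eq_of_le_of_finrank_le (inf_le_inf_left F (hD hγ₀γ'))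
      (Function.argmin_le (fun γ => finrank K ↥(F ⊓ D γ)) γ')
  have hD₀ : D γ₀ = D γ' :=
    calc D γ₀ = (D γ' ⊔ F) ⊓ D γ₀ := (inf_eq_right.mpr (hDF γ₀ γ')).symm
      _ = D γ' ⊔ F ⊓ D γ₀ := sup_inf_assoc_of_le F (hD hγ₀γ')
      _ = D γ' := by rw [← hstable, sup_eq_left.mpr inf_le_right]
  exact hD₀ ▸ hD hγγ'

end Modular

section OConvergence

variable {Γ P Q : Type*} [Preorder Γ] [Preorder P] [Preorder Q] {f : P → Q}

theorem OConvergesTo.comp_of_monotone (hf : Monotone f)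
    (hinc : ∀ {a : Γ → P} {l : P}, IncreasingTo a l → IncreasingTo (f ∘ a) (f l))
    (hdec : ∀ {b : Γ → P} {l : P}, DecreasingTo b l → DecreasingTo (f ∘ b) (f l))
    {x : Γ → P} {l : P} (h : OConvergesTo x l) : OConvergesTo (f ∘ x) (f l) :=
  let ⟨a, b, hax, hxb, ha, hb⟩ := h
  ⟨f ∘ a, f ∘ b, fun γ => hf (hax γ), fun γ => hf (hxb γ), hinc ha, hdec hb⟩

end OConvergence

section Orthogonal

variable {M N : Submodule 𝕜 S}

theorem Submodule.orthogonal_orthogonal_inf (hM : Mᗮᗮ = M) (hN : Nᗮᗮ = N) :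
    (M ⊓ N)ᗮᗮ = M ⊓ N :=
  le_antisymm
    (le_inf ((orthogonal_orthogonal_monotone inf_le_left).trans_eq hM)
      ((orthogonal_orthogonal_monotone inf_le_right).trans_eq hN))
    (le_orthogonal_orthogonal _)

theorem Submodule.exists_inner_ne_zero_of_notMem (hM : Mᗮᗮ = M) {x : S} (hx : x ∉ M) :
    ∃ g ∈ Mᗮ, inner 𝕜 g x ≠ 0 := by
  rw [← hM, mem_orthogonal] at hx
  simpa only [not_forall, exists_prop] using hx

end Orthogonal

namespace IsPreHilbertLogic

variable {L : Set (Submodule 𝕜 S)}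

theorem sup_mem (hL : IsPreHilbertLogic L) {M : Submodule 𝕜 S} (hM : M ∈ L) (F : Submodule 𝕜 S)
    [FiniteDimensional 𝕜 F] : M ⊔ F ∈ L := by
  have hF : F.FG := (fg_iff_finiteDimensional F).mpr ‹_›
  induction F, hF using fg_induction generalizing M with
  | singleton u => exact hL.2.2.2 M hM u
  | sup F₁ F₂ _ _ ih₁ ih₂ => exact sup_assoc M F₁ F₂ ▸ ih₂ (ih₁ hM)

theorem inf_orthogonal_mem (hL : IsPreHilbertLogic L) {C : Submodule 𝕜 S} (hC : C ∈ L)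
    (G : Submodule 𝕜 S) [FiniteDimensional 𝕜 G] : C ⊓ Gᗮ ∈ L := by
  have h := hL.2.2.1 _ (hL.sup_mem (hL.2.2.1 C hC) G)
  rwa [← inf_orthogonal, hL.1 C hC] at h

theorem mem_of_le_of_le_sup (hL : IsPreHilbertLogic L) {C D F : Submodule 𝕜 S}
    [FiniteDimensional 𝕜 F] (hC : C ∈ L) (hD : Dᗮᗮ = D) (hDC : D ≤ C) (hCDF : C ≤ D ⊔ F) :
    D ∈ L := by
  induction hn : finrank 𝕜 F using Nat.strong_induction_on generalizing C F with
  | _ n ih =>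
  by_cases hFD : F ≤ D
  · rwa [le_antisymm (hCDF.trans (sup_le le_rfl hFD)) hDC] at hC
  obtain ⟨x, hxF, hxD⟩ := SetLike.not_le_iff_exists.mp hFD
  obtain ⟨g, hg, hgx⟩ := exists_inner_ne_zero_of_notMem hD hxD
  have hDg : D ≤ (𝕜 ∙ g)ᗮ := hD ▸ orthogonal_le ((span_singleton_le_iff_mem g _).mpr hg)
  have hF' : F ⊓ (𝕜 ∙ g)ᗮ < F := inf_lt_left.mpr fun h =>
    hgx (inner_right_of_mem_orthogonal (mem_span_singleton_self g) (h hxF))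
  refine ih _ (hn ▸ finrank_lt_finrank_of_lt hF') (hL.inf_orthogonal_mem hC _)
    (le_inf hDC hDg) ?_ rfl
  calc C ⊓ (𝕜 ∙ g)ᗮ ≤ (D ⊔ F) ⊓ (𝕜 ∙ g)ᗮ := inf_le_inf_right _ hCDF
    _ = D ⊔ F ⊓ (𝕜 ∙ g)ᗮ := sup_inf_assoc_of_le F hDg

def perturb (hL : IsPreHilbertLogic L) (F : Submodule 𝕜 S) [FiniteDimensional 𝕜 F] : L → L :=
  fun A => ⟨A ⊔ F, hL.sup_mem A.2 F⟩

variable (hL : IsPreHilbertLogic L) (F : Submodule 𝕜 S) [FiniteDimensional 𝕜 F]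
  {Γ : Type*} {A : Γ → L} {Alim : L}

theorem monotone_perturb : Monotone (hL.perturb F) :=
  fun _ _ h => sup_le_sup_right h F

theorem isLUB_perturb [Nonempty Γ] (h : IsLUB (Set.range A) Alim) :
    IsLUB (Set.range (hL.perturb F ∘ A)) (hL.perturb F Alim) := by
  refine ⟨Set.forall_mem_range.2 fun γ => hL.monotone_perturb F (h.1 ⟨γ, rfl⟩), fun C hC => ?_⟩
  have hCF : ∀ γ, (A γ : Submodule 𝕜 S) ⊔ F ≤ C := fun γ => hC ⟨γ, rfl⟩
  exact sup_le (h.2 (Set.forall_mem_range.2 fun γ => le_sup_left.trans (hCF γ)))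
    (le_sup_right.trans (hCF (Classical.arbitrary Γ)))

theorem isGLB_perturb [Preorder Γ] [IsDirected Γ (· ≤ ·)] [Nonempty Γ] (hA : Antitone A)
    (h : IsGLB (Set.range A) Alim) :
    IsGLB (Set.range (hL.perturb F ∘ A)) (hL.perturb F Alim) := by
  refine ⟨Set.forall_mem_range.2 fun γ => hL.monotone_perturb F (h.1 ⟨γ, rfl⟩), fun C hC => ?_⟩
  have hCF : ∀ γ, (C : Submodule 𝕜 S) ≤ (A γ : Submodule 𝕜 S) ⊔ F := fun γ => hC ⟨γ, rfl⟩
  set C' := (C : Submodule 𝕜 S) ⊔ F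
  have hC' : C' ∈ L := hL.sup_mem C.2 F
  set D : Γ → Submodule 𝕜 S := fun γ => C' ⊓ A γ
  have hC'D : ∀ γ, C' ≤ D γ ⊔ F := fun γ =>
    calc C' ≤ C' ⊓ (A γ ⊔ F) := le_inf le_rfl (sup_le (hCF γ) le_sup_right)
      _ = D γ ⊔ F := (inf_sup_assoc_of_le _ le_sup_right).symm
  obtain ⟨γ₀, hγ₀⟩ := exists_forall_le_of_antitone_of_le_sup
    (fun _ _ h => inf_le_inf_left C' (hA h)) F fun _ γ' => inf_le_left.trans (hC'D γ')
  have hD₀ : D γ₀ ∈ L := hL.mem_of_le_of_le_sup hC'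
    (orthogonal_orthogonal_inf (hL.1 _ hC') (hL.1 _ (A γ₀).2)) inf_le_left (hC'D γ₀)
  have hD₀A : D γ₀ ≤ Alim :=
    @h.2 ⟨D γ₀, hD₀⟩ (Set.forall_mem_range.2 fun γ => (hγ₀ γ).trans inf_le_right)
  exact le_sup_left.trans ((hC'D γ₀).trans (sup_le_sup_right hD₀A F))

theorem increasingTo_perturb [Preorder Γ] [Nonempty Γ] (h : IncreasingTo A Alim) :
    IncreasingTo (hL.perturb F ∘ A) (hL.perturb F Alim) :=
  ⟨(hL.monotone_perturb F).comp h.1, hL.isLUB_perturb F h.2⟩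

theorem decreasingTo_perturb [Preorder Γ] [IsDirected Γ (· ≤ ·)] [Nonempty Γ]
    (h : DecreasingTo A Alim) :
    DecreasingTo (hL.perturb F ∘ A) (hL.perturb F Alim) :=
  ⟨(hL.monotone_perturb F).comp_antitone h.1, hL.isGLB_perturb F h.1 h.2⟩

end IsPreHilbertLogic

/-- In a pre-Hilbert space logic `L`, perturbation by a finite dimensional subspace `F`,
`T_F : A ↦ A + F`, is o-continuous: it maps o-convergent nets in `L` to o-convergent
nets; in particular `Aᵧ ↑ A` implies `Aᵧ + F ↑ A + F` and `Aᵧ ↓ A` implies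
`Aᵧ + F ↓ A + F` in `L`. -/
theorem perturbation_oContinuous (L : Set (Submodule 𝕜 S)) (hL : IsPreHilbertLogic L)
    (F : Submodule 𝕜 S) [FiniteDimensional 𝕜 F]
    (Γ : Type*) [Preorder Γ] [IsDirected Γ (· ≤ ·)] [Nonempty Γ]
    (A : Γ → L) (Alim : L) (B : Γ → L) (Blim : L)
    (hB : ∀ γ, (B γ : Submodule 𝕜 S) = (A γ : Submodule 𝕜 S) ⊔ F)
    (hBlim : (Blim : Submodule 𝕜 S) = (Alim : Submodule 𝕜 S) ⊔ F) :
    (OConvergesTo A Alim → OConvergesTo B Blim) ∧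
      (IncreasingTo A Alim → IncreasingTo B Blim) ∧
      (DecreasingTo A Alim → DecreasingTo B Blim) := by
  obtain rfl : B = hL.perturb F ∘ A := funext fun γ => Subtype.ext (hB γ)
  obtain rfl : Blim = hL.perturb F Alim := Subtype.ext hBlim
  exact ⟨OConvergesTo.comp_of_monotone (hL.monotone_perturb F) (hL.increasingTo_perturb F)
      (hL.decreasingTo_perturb F), hL.increasingTo_perturb F, hL.decreasingTo_perturb F⟩
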